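/- arXiv:1701.03378 — 2 statements merged into one kernel-verified Lean document; each statement's English description precedes it below -/
import Mathlib

section
/- Let n ≥ 2 and let f ∈ F, f ≠ 0, be given by an admissible linear system 𝒜 = (e₁, A, v) of dimension n whose left family and right family are each K-linearly independent, where A has the block form A = [[1, b', b], [0, B, b''], [0, 0, 1]] (with B ∈ F^{(n−2)×(n−2)}, b' ∈ F^{1×(n−2)}, b ∈ F, b'' ∈ F^{(n−2)×1}) and v = (0,…,0,λ)ᵀ with λ ∈ K. Then the (n−1) × (n−1) matrix A' = [[−λ Σ b'', −Σ B Σ], [−λ b, −b' Σ]] (Σ = Σ_{n−2}) is invertible over F, 𝒜' = (e₁, A', e_{n−1}) is an admissible linear system of dimension n−1 for f⁻¹, the left family and the right family of 𝒜' are each K-linearly independent, and 1 ∉ L(𝒜') and 1 ∉ R(𝒜'). -/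
/-!
Blockwise, `A⁻¹ = [[1, -b'C, r], [0, C, -Cb''], [0, 0, 1]]` with `BC = 1` and `r = b'Cb'' - b`,
so `f = λ r`. In `A'` the block `-ΣBΣ` has right inverse `-ΣCΣ`, and its Schur complement is
`-λb + λ b'Cb'' = λ r = f ≠ 0`, so the block inversion formula gives a right inverse of `A'`,
which is two-sided since matrix rings over a division ring are Dedekind-finite. Its last column
is `(f⁻¹, Σ s_mid f⁻¹)` and its first row is `f⁻¹ (t_mid Σ, 1)`, where `s`, `t` are the families
of `𝒜`. Adjoining `1` to either family of `𝒜'` and multiplying by `f` (on the right, resp. left)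
gives a reindexing of the corresponding family of `𝒜` with one entry rescaled by `λ^{±1}`; this
yields independence and `1 ∉ L(𝒜')`, `1 ∉ R(𝒜')` at once.
-/

open Matrix

/-- The permutation matrix `Σ_m` reversing the order of rows/columns. -/
def revMat (F : Type*) [Semiring F] (m : ℕ) : Matrix (Fin m) (Fin m) F :=
  Matrix.of fun p q => if q = p.rev then 1 else 0

open Function Submodule

theorem revMat_mul_apply {F : Type*} [Semiring F] {m : ℕ} {n : Type*} (M : Matrix (Fin m) n F)
    (i : Fin m) (j : n) : (revMat F m * M) i j = M i.rev j := by
  simp [revMat, Matrix.mul_apply]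

theorem mul_revMat_apply {F : Type*} [Semiring F] {m : ℕ} {n : Type*} (M : Matrix n (Fin m) F)
    (i : n) (j : Fin m) : (M * revMat F m) i j = M i j.rev := by
  have h : ∀ x : Fin m, (j = Fin.rev x) ↔ (x = Fin.rev j) :=
    fun x => by constructor <;> (rintro rfl; simp)
  simp [revMat, Matrix.mul_apply, h]

theorem revMat_mul_revMat {F : Type*} [Semiring F] (m : ℕ) :
    revMat F m * revMat F m = 1 := by
  ext i j
  rw [revMat_mul_apply]
  simp [revMat, Matrix.one_apply, eq_comm]

theorem revMat_mul_revMat_mul {F : Type*} [Semiring F] {m : ℕ} {n : Type*}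
    (M : Matrix (Fin m) n F) : revMat F m * (revMat F m * M) = M := by
  rw [← Matrix.mul_assoc, revMat_mul_revMat, Matrix.one_mul]

theorem neg_revMat_conj_mul_neg_revMat_conj {F : Type*} [Ring F] {m : ℕ}
    {B C : Matrix (Fin m) (Fin m) F} (hBC : B * C = 1) :
    -(revMat F m * B * revMat F m) * -(revMat F m * C * revMat F m) = 1 := by
  simp only [Matrix.neg_mul, Matrix.mul_neg, neg_neg, Matrix.mul_assoc, revMat_mul_revMat_mul]
  rw [← Matrix.mul_assoc B, hBC, Matrix.one_mul, revMat_mul_revMat]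

namespace Matrix

section Ring

variable {R : Type*} [Ring R]

theorem eq_fromBlocks_of_inverse_fromBlocks_one₁₁ {l n : Type*} [Fintype l] [Fintype n]
    [DecidableEq l] [DecidableEq n] {Q : Matrix l n R} {T : Matrix n n R}
    {X : Matrix (l ⊕ n) (l ⊕ n) R}
    (hAX : fromBlocks (1 : Matrix l l R) Q 0 T * X = 1)
    (hXA : X * fromBlocks (1 : Matrix l l R) Q 0 T = 1) :
    ∃ Y, T * Y = 1 ∧ Y * T = 1 ∧ X = fromBlocks (1 : Matrix l l R) (-(Q * Y)) 0 Y := by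
  rw [← fromBlocks_toBlocks X, fromBlocks_multiply, ← fromBlocks_one, fromBlocks_inj] at hAX hXA
  obtain ⟨-, h12, -, h22⟩ := hAX
  obtain ⟨k11, -, k21, k22⟩ := hXA
  simp only [Matrix.one_mul, Matrix.mul_one, Matrix.zero_mul, Matrix.mul_zero, add_zero,
    zero_add] at h12 h22 k11 k21 k22
  rw [k21, Matrix.zero_mul, zero_add] at k22
  refine ⟨X.toBlocks₂₂, h22, k22, ?_⟩
  rw [← fromBlocks_toBlocks X, k11, k21, eq_neg_of_add_eq_zero_left h12, toBlocks_fromBlocks₂₂]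

theorem eq_fromBlocks_of_inverse_fromBlocks_one₂₂ {l n : Type*} [Fintype l] [Fintype n]
    [DecidableEq l] [DecidableEq n] {Q : Matrix l n R} {T : Matrix l l R}
    {X : Matrix (l ⊕ n) (l ⊕ n) R}
    (hAX : fromBlocks T Q 0 (1 : Matrix n n R) * X = 1)
    (hXA : X * fromBlocks T Q 0 (1 : Matrix n n R) = 1) :
    ∃ Y, T * Y = 1 ∧ Y * T = 1 ∧ X = fromBlocks Y (-(Y * Q)) 0 (1 : Matrix n n R) := by
  rw [← fromBlocks_toBlocks X, fromBlocks_multiply, ← fromBlocks_one, fromBlocks_inj] at hAX hXA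
  obtain ⟨h11, -, h21, h22⟩ := hAX
  obtain ⟨k11, k12, -, -⟩ := hXA
  simp only [Matrix.one_mul, Matrix.mul_one, Matrix.zero_mul, Matrix.mul_zero, add_zero,
    zero_add] at h11 h21 h22 k11 k12
  rw [h21, Matrix.mul_zero, add_zero] at h11
  refine ⟨X.toBlocks₁₁, h11, k11, ?_⟩
  rw [← fromBlocks_toBlocks X, h21, h22, eq_neg_of_add_eq_zero_right k12, toBlocks_fromBlocks₁₁]

theorem eq_fromBlocks_of_inverse_fromBlocks_one_fromBlocks_one {l m n : Type*} [Fintype l]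
    [Fintype m] [Fintype n] [DecidableEq l] [DecidableEq m] [DecidableEq n] {b' : Matrix l m R}
    {b : Matrix l n R} {B : Matrix m m R} {b'' : Matrix m n R}
    {X : Matrix (l ⊕ (m ⊕ n)) (l ⊕ (m ⊕ n)) R}
    (hAX : fromBlocks 1 (fromCols b' b) 0 (fromBlocks B b'' 0 1) * X = 1)
    (hXA : X * fromBlocks 1 (fromCols b' b) 0 (fromBlocks B b'' 0 1) = 1) :
    ∃ C, B * C = 1 ∧ X = fromBlocks 1 (fromCols (-(b' * C)) (b' * C * b'' - b)) 0
      (fromBlocks C (-(C * b'')) 0 1) := by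
  obtain ⟨Y, hY, hY', rfl⟩ := eq_fromBlocks_of_inverse_fromBlocks_one₁₁ hAX hXA
  obtain ⟨C, hBC, -, rfl⟩ := eq_fromBlocks_of_inverse_fromBlocks_one₂₂ hY hY'
  refine ⟨C, hBC, ?_⟩
  rw [fromCols_mul_fromBlocks, fromCols_neg]
  simp only [Matrix.mul_zero, add_zero, Matrix.mul_neg, Matrix.mul_one, Matrix.mul_assoc]
  congr 3
  abel

theorem fromBlocks_mul_fromBlocks_eq_one_of_schur {m o p : Type*} [Fintype m] [Fintype o]
    [Fintype p] [DecidableEq m] [DecidableEq p] {c : Matrix m o R} {D : Matrix m m R}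
    {e : Matrix p o R} {d : Matrix p m R} {D' : Matrix m m R} {σ' : Matrix o p R} (hD : D * D' = 1)
    (hσ : (e - d * D' * c) * σ' = 1) :
    fromBlocks c D e d *
      fromBlocks (-(σ' * (d * D'))) σ' (D' + D' * c * σ' * (d * D')) (-(D' * c * σ')) = 1 := by
  have he : e * σ' = 1 + d * D' * c * σ' := by
    rw [← hσ, Matrix.sub_mul]; abel
  rw [fromBlocks_multiply, ← fromBlocks_one]
  congr 1
  · simp only [Matrix.mul_add, Matrix.mul_neg, ← Matrix.mul_assoc, hD, Matrix.one_mul]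
    abel
  · simp only [Matrix.mul_neg, ← Matrix.mul_assoc, hD, Matrix.one_mul, add_neg_cancel]
  · simp only [Matrix.mul_add, Matrix.mul_neg, ← Matrix.mul_assoc, he, Matrix.add_mul,
      Matrix.one_mul]
    abel
  · rw [Matrix.mul_neg, ← Matrix.mul_assoc, ← Matrix.mul_assoc, ← sub_eq_add_neg,
      ← Matrix.sub_mul, hσ]

end Ring

variable {R : Type*} [Semiring R] {l n o : Type*}

theorem mul_of_ite_eq_apply [Fintype n] [DecidableEq n] (M : Matrix l n R) (k : n) (a : R)
    (i : l) (j : o) :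
    (M * of fun p (_ : o) => if p = k then a else 0) i j = M i k * a := by
  simp [Matrix.mul_apply]

theorem mul_of_const_apply [Fintype o] [Unique o] (M : Matrix l o R) (a : R) (i : l) (j : n) :
    (M * of fun (_ : o) (_ : n) => a) i j = M i default * a := by
  simp [Matrix.mul_apply]

theorem of_const_mul_apply [Fintype o] [Unique o] (a : R) (M : Matrix o n R) (i : l) (j : n) :
    ((of fun (_ : l) (_ : o) => a) * M) i j = a * M default j := by
  simp [Matrix.mul_apply]

end Matrix

theorem linearIndependent_and_notMem_span_of_map_smul_comp {K V W ι κ : Type*} [DivisionRing K]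
    [AddCommGroup V] [Module K V] [AddCommGroup W] [Module K W] {g : ι → V}
    (hg : LinearIndependent K g) {e : Option κ → ι} (he : Injective e) (c : Option κ → Kˣ)
    {φ : V →ₗ[K] W} (hφ : Injective φ) {x : W} {h : κ → W}
    (hφx : ∀ o, φ (c o • g (e o)) = Option.casesOn' o x h) :
    LinearIndependent K h ∧ x ∉ span K (Set.range h) := by
  have hcomp : (fun o => Option.casesOn' o x h) = φ ∘ (c • (g ∘ e)) :=
    funext fun o => (hφx o).symm
  rw [← linearIndependent_option', hcomp]
  exact ((hg.comp e he).units_smul c).map' φ (LinearMap.ker_eq_bot.mpr hφ)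

namespace TypeOneOne

variable {K F : Type*} [Field K] [DivisionRing F] [Algebra K F] {m : ℕ}

local notation "S" => revMat F m

theorem schur_complement_eq (lam : K) (b : F) (b' : Matrix (Fin 1) (Fin m) F)
    (C : Matrix (Fin m) (Fin m) F) (b'' : Matrix (Fin m) (Fin 1) F) :
    of (fun _ _ => -(algebraMap K F lam * b)) -
        -(b' * S) * -(S * C * S) * -(algebraMap K F lam • (S * b'')) =
      of fun _ _ => algebraMap K F lam * ((b' * C * b'') 0 0 - b) := by
  simp only [algebraMap_smul, Matrix.neg_mul, Matrix.mul_neg, neg_neg, Matrix.mul_smul,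
    Matrix.mul_assoc, revMat_mul_revMat_mul]
  ext i j
  rw [Subsingleton.elim i 0, Subsingleton.elim j 0]
  simp only [Matrix.sub_apply, of_apply, Matrix.neg_apply, Matrix.smul_apply]
  rw [Algebra.smul_def, mul_sub]
  abel

variable {lam : K} {f : F}

theorem exists_rightInverse {b : F} {b' : Matrix (Fin 1) (Fin m) F}
    {B C : Matrix (Fin m) (Fin m) F} {b'' : Matrix (Fin m) (Fin 1) F} (hBC : B * C = 1)
    (hne : f ≠ 0) (hf : f = algebraMap K F lam * ((b' * C * b'') 0 0 - b)) :
    ∃ B' : Matrix (Fin 1 ⊕ Fin m) (Fin m ⊕ Fin 1) F,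
      fromBlocks (-(algebraMap K F lam • (S * b''))) (-(S * B * S))
        (of fun _ _ => -(algebraMap K F lam * b)) (-(b' * S)) * B' = 1 ∧
      B' (Sum.inl 0) (Sum.inr 0) = f⁻¹ ∧
      (∀ i, B' (Sum.inr i) (Sum.inr 0) = -(C * b'') i.rev 0 * algebraMap K F lam * f⁻¹) ∧
      ∀ j, B' (Sum.inl 0) (Sum.inl j) = f⁻¹ * -(b' * C) 0 j.rev := by
  have hσ : (of (fun _ _ => -(algebraMap K F lam * b)) -
      -(b' * S) * -(S * C * S) * -(algebraMap K F lam • (S * b''))) *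
      of (fun _ _ => f⁻¹) = 1 := by
    rw [schur_complement_eq, ← hf]
    ext i j
    simp [Matrix.mul_apply, mul_inv_cancel₀ hne, Matrix.one_apply, Subsingleton.elim i j]
  have hdD : -(b' * S) * -(S * C * S) = b' * C * S := by
    simp only [Matrix.neg_mul, Matrix.mul_neg, neg_neg, Matrix.mul_assoc, revMat_mul_revMat_mul]
  have hDc : -(S * C * S) * -(algebraMap K F lam • (S * b'')) = lam • (S * (C * b'')) := by
    simp only [algebraMap_smul, Matrix.neg_mul, Matrix.mul_neg, smul_neg, neg_neg,
      Matrix.mul_smul, Matrix.mul_assoc, revMat_mul_revMat_mul]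
  have h :=
    fromBlocks_mul_fromBlocks_eq_one_of_schur (neg_revMat_conj_mul_neg_revMat_conj hBC) hσ
  rw [hdD, hDc] at h
  refine ⟨_, h, rfl, fun i => ?_, fun j => ?_⟩
  · simp [mul_of_const_apply, revMat_mul_apply, Algebra.smul_def, Algebra.commutes, mul_assoc]
  · simp [of_const_mul_apply, mul_revMat_apply]

theorem linearIndependent_and_one_notMem_span_left {s : Fin 1 ⊕ (Fin m ⊕ Fin 1) → F}
    (hs : LinearIndependent K s) (hne : f ≠ 0) (hlam : lam ≠ 0) (hs₁ : s (Sum.inl 0) = f)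
    (hsₙ : s (Sum.inr (Sum.inr 0)) = algebraMap K F lam) {s' : Fin 1 ⊕ Fin m → F}
    (hs'₁ : s' (Sum.inl 0) = f⁻¹)
    (hs' : ∀ i, s' (Sum.inr i) = s (Sum.inr (Sum.inl i.rev)) * f⁻¹) :
    LinearIndependent K s' ∧ (1 : F) ∉ span K (Set.range s') := by
  refine linearIndependent_and_notMem_span_of_map_smul_comp hs
    (e := fun o => Option.casesOn' o (Sum.inl 0)
      (Sum.elim (fun _ => Sum.inr (Sum.inr 0)) fun i => Sum.inr (Sum.inl i.rev)))
    (by rintro (_ | _ | _) (_ | _ | _) <;> simp [Fin.fin_one_eq_zero])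
    (fun o => Option.casesOn' o 1 (Sum.elim (fun _ => (Units.mk0 lam hlam)⁻¹) fun _ => 1))
    (φ := LinearMap.mulRight K f⁻¹) (mul_left_injective₀ (inv_ne_zero hne)) ?_
  rintro (_ | k | i)
  · simp [hs₁, hne]
  · simp [Fin.fin_one_eq_zero k, hsₙ, hs'₁, Units.smul_def, Algebra.smul_def, hlam]
  · simp [hs']

theorem linearIndependent_and_one_notMem_span_right {t : Fin 1 ⊕ (Fin m ⊕ Fin 1) → F}
    (ht : LinearIndependent K t) (hne : f ≠ 0) (hlam : lam ≠ 0) (ht₁ : t (Sum.inl 0) = 1)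
    (htₙ : algebraMap K F lam * t (Sum.inr (Sum.inr 0)) = f) {t' : Fin m ⊕ Fin 1 → F}
    (ht' : ∀ j, t' (Sum.inl j) = f⁻¹ * t (Sum.inr (Sum.inl j.rev)))
    (ht'₁ : t' (Sum.inr 0) = f⁻¹) :
    LinearIndependent K t' ∧ (1 : F) ∉ span K (Set.range t') := by
  refine linearIndependent_and_notMem_span_of_map_smul_comp ht
    (e := fun o => Option.casesOn' o (Sum.inr (Sum.inr 0))
      (Sum.elim (fun j => Sum.inr (Sum.inl j.rev)) fun _ => Sum.inl 0))
    (by rintro (_ | _ | _) (_ | _ | _) <;> simp [Fin.fin_one_eq_zero])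
    (fun o => Option.casesOn' o (Units.mk0 lam hlam) 1)
    (φ := LinearMap.mulLeft K f⁻¹) (mul_right_injective₀ (inv_ne_zero hne)) ?_
  rintro (_ | j | k)
  · simp [Units.smul_def, Algebra.smul_def, htₙ, hne]
  · simp [ht']
  · simp [Fin.fin_one_eq_zero k, ht₁, ht'₁]

end TypeOneOne

/-- Inverse of type (1,1): if `f ≠ 0` has a minimal ALS of dimension `n = m + 2` with
system matrix `[[1, b', b], [0, B, b''], [0, 0, 1]]` and right-hand side `(0,…,0,λ)ᵀ`,
then `A' = [[−λ Σ b'', −Σ B Σ], [−λ b, −b' Σ]]` gives a minimal ALS `(e₁, A', e_{n−1})`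
of dimension `n − 1` for `f⁻¹`, with `1 ∉ L(𝒜')` and `1 ∉ R(𝒜')`. -/
theorem inverse_type_one_one {K F : Type*} [Field K] [DivisionRing F] [Algebra K F]
    {m : ℕ}
    (f : F) (hne : f ≠ 0)
    (b : F) (b' : Matrix (Fin 1) (Fin m) F) (B : Matrix (Fin m) (Fin m) F)
    (b'' : Matrix (Fin m) (Fin 1) F) (lam : K)
    (A : Matrix (Fin 1 ⊕ (Fin m ⊕ Fin 1)) (Fin 1 ⊕ (Fin m ⊕ Fin 1)) F)
    (hA : A = fromBlocks 1 (fromCols b' (Matrix.of fun _ _ => b)) 0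
      (fromBlocks B b'' 0 1))
    (v : Matrix (Fin 1 ⊕ (Fin m ⊕ Fin 1)) (Fin 1) F)
    (hv : v = Matrix.of fun p _ =>
      if p = Sum.inr (Sum.inr 0) then algebraMap K F lam else 0)
    (Binv : Matrix (Fin 1 ⊕ (Fin m ⊕ Fin 1)) (Fin 1 ⊕ (Fin m ⊕ Fin 1)) F)
    (hAB : A * Binv = 1) (hBA : Binv * A = 1)
    (hf : f = (Binv * v) (Sum.inl 0) 0)
    (hleft : LinearIndependent K fun p => (Binv * v) p 0)
    (hright : LinearIndependent K fun q => Binv (Sum.inl 0) q) :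
    let S : Matrix (Fin m) (Fin m) F := revMat F m
    let A' : Matrix (Fin m ⊕ Fin 1) (Fin 1 ⊕ Fin m) F :=
      fromBlocks (-(algebraMap K F lam • (S * b''))) (-(S * B * S))
        (Matrix.of fun _ _ => -(algebraMap K F lam * b)) (-(b' * S))
    let v' : Matrix (Fin m ⊕ Fin 1) (Fin 1) F :=
      Matrix.of fun p _ => if p = Sum.inr 0 then 1 else 0
    ∃ B' : Matrix (Fin 1 ⊕ Fin m) (Fin m ⊕ Fin 1) F,
      A' * B' = 1 ∧ B' * A' = 1 ∧
      (B' * v') (Sum.inl 0) 0 = f⁻¹ ∧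
      (LinearIndependent K fun p => (B' * v') p 0) ∧
      (LinearIndependent K fun q => B' (Sum.inl 0) q) ∧
      (1 : F) ∉ Submodule.span K (Set.range fun p => (B' * v') p 0) ∧
      (1 : F) ∉ Submodule.span K (Set.range fun q => B' (Sum.inl 0) q) := by
  intro S A' v'
  subst hA hv
  obtain ⟨C, hBC, rfl⟩ := eq_fromBlocks_of_inverse_fromBlocks_one_fromBlocks_one hAB hBA
  have hfl : f = algebraMap K F lam * ((b' * C * b'') 0 0 - b) := by
    rw [hf, mul_of_ite_eq_apply, fromBlocks_apply₁₂, fromCols_apply_inr, Matrix.sub_apply,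
      of_apply, Algebra.commutes]
  have hlam : lam ≠ 0 := by rintro rfl; simp at hfl; exact hne hfl
  obtain ⟨B', hA'B', hcorner, hcol, hrow⟩ := TypeOneOne.exists_rightInverse hBC hne hfl
  have hB'v' : ∀ p, (B' * v') p 0 = B' p (Sum.inr 0) := fun p =>
    (mul_of_ite_eq_apply _ _ _ _ _).trans (mul_one _)
  refine ⟨B', hA'B', (mul_eq_one_comm_of_card_eq _ _ _ (by simp [add_comm])).mp hA'B', ?_, ?_⟩
  · rw [hB'v', hcorner]
  simp only [hB'v']
  rw [← and_assoc, and_and_and_comm]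
  refine ⟨TypeOneOne.linearIndependent_and_one_notMem_span_left hleft hne hlam ?_ ?_ hcorner ?_,
    TypeOneOne.linearIndependent_and_one_notMem_span_right hright hne hlam ?_ ?_ ?_ hcorner⟩
  all_goals simp [hf, hcol, hrow, mul_of_ite_eq_apply, Algebra.commutes]
end

section
/- Let n ≥ 2 and let f ∈ F, f ≠ 0, be given by an admissible linear system 𝒜 = (e₁, A, v) of dimension n whose left family and right family are each K-linearly independent and with 1 ∉ L(𝒜), where A has the block form A = [[1, b', b], [0, B, b''], [0, c', c]] (with B ∈ F^{(n−2)×(n−2)}, b' , c' ∈ F^{1×(n−2)}, b, c ∈ F, b'' ∈ F^{(n−2)×1}) and v = (0,…,0,λ)ᵀ with λ ∈ K (necessarily λ ≠ 0 since f ≠ 0). Then the n × n matrix A' = [[1, −(1/λ) c, −(1/λ) c' Σ], [0, −Σ b'', −Σ B Σ], [0, −b, −b' Σ]] (Σ = Σ_{n−2}) is invertible over F, 𝒜' = (e₁, A', e_n) is an admissible linear system of dimension n for f⁻¹, the left family and the right family of 𝒜' are each K-linearly independent, and 1 ∉ L(𝒜'). -/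
/-!
Write `s = A⁻¹ v` for the left family of `𝒜`, so `s₁ = f` and `A s = λ eₙ`. Let `P` be `−I` with
its first column replaced by `s`, and `G` the diagonal matrix scaling the last row by `1/λ`. Then
`A'` is `G A P` with its rows put in reverse order and its columns in the order `1, n, n−1, …, 2`,
so it is invertible, with inverse read off from `P⁻¹ A⁻¹ G⁻¹`. Since the first column of `A` is
`e₁`, so is that of `A⁻¹`, and the left family of `𝒜'` is `(1, s₂, …, sₙ) f⁻¹` (reordered), while
its right family is `f⁻¹` times the right family of `𝒜`, reordered and rescaled by nonzero
scalars. Linear independence of `(1, s₁, …, sₙ)`, which is that of `s` together with `1 ∉ L(𝒜)`,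
gives that `(1, s₂, …, sₙ)` is independent and does not span `s₁ = f`; the latter is `1 ∉ L(𝒜')`.
-/

open Matrix

open Submodule

namespace Matrix

variable {ι R : Type*} [DecidableEq ι]

def colPivot [Ring R] (s : ι → R) (i₀ : ι) : Matrix ι ι R :=
  (-1 : Matrix ι ι R).updateCol i₀ s

section Ring

variable [Ring R]

theorem colPivot_apply_of_ne {s : ι → R} {i₀ j : ι} (hj : j ≠ i₀) (i : ι) :
    colPivot s i₀ i j = -(1 : Matrix ι ι R) i j :=
  updateCol_ne hj

variable [Fintype ι]

theorem mul_colPivot {κ : Type*} (A : Matrix κ ι R) (s : ι → R) (i₀ : ι) :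
    A * colPivot s i₀ = (-A).updateCol i₀ (A *ᵥ s) := by
  rw [colPivot, mul_updateCol, Matrix.mul_neg, Matrix.mul_one]

theorem colPivot_mul_apply_self {κ : Type*} (s : ι → R) (i₀ : ι) (M : Matrix ι κ R) (j : κ) :
    (colPivot s i₀ * M) i₀ j = s i₀ * M i₀ j := by
  rw [mul_apply, Fintype.sum_eq_single i₀ fun k hk => ?_]
  · simp [colPivot]
  · simp [colPivot_apply_of_ne hk, one_apply_ne' hk]

theorem colPivot_mulVec_self (s t : ι → R) (i₀ : ι) :
    (colPivot s i₀ *ᵥ t) i₀ = s i₀ * t i₀ := by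
  rw [mulVec, dotProduct, Fintype.sum_eq_single i₀ fun k hk => ?_]
  · simp [colPivot]
  · simp [colPivot_apply_of_ne hk, one_apply_ne' hk]

theorem colPivot_mulVec_of_ne (s t : ι → R) {i₀ i : ι} (hi : i ≠ i₀) :
    (colPivot s i₀ *ᵥ t) i = s i * t i₀ - t i := by
  rw [mulVec, dotProduct, Fintype.sum_eq_add i₀ i hi.symm fun k hk => ?_]
  · simp [colPivot, hi, sub_eq_add_neg]
  · simp [colPivot_apply_of_ne hk.1, one_apply_ne' hk.2]

theorem colPivot_mul_colPivot {s t : ι → R} {i₀ : ι} (h₀ : s i₀ * t i₀ = 1)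
    (h : ∀ i ≠ i₀, s i * t i₀ = t i) : colPivot s i₀ * colPivot t i₀ = 1 := by
  rw [mul_colPivot]
  ext i j
  rcases eq_or_ne j i₀ with rfl | hj
  · rcases eq_or_ne i j with rfl | hi
    · simp [colPivot_mulVec_self, h₀]
    · simp [colPivot_mulVec_of_ne _ _ hi, h i hi, one_apply_ne hi]
  · simp [updateCol_ne hj, colPivot_apply_of_ne hj]

theorem mul_apply_of_col_eq_single {α κ : Type*} (M : Matrix α ι R) {N : Matrix ι κ R} {i₀ : ι}
    {j : κ} (hN : ∀ k, N k j = (Pi.single i₀ 1 : ι → R) k) (i : α) : (M * N) i j = M i i₀ := by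
  simp [mul_apply, hN, Pi.single_apply]

theorem col_eq_single_of_mul_eq_one {N A : Matrix ι ι R} (hNA : N * A = 1) {i₀ : ι}
    (hA : ∀ k, A k i₀ = (Pi.single i₀ 1 : ι → R) k) (k : ι) :
    N k i₀ = (Pi.single i₀ 1 : ι → R) k := by
  rw [← mul_apply_of_col_eq_single N hA, hNA, one_apply, Pi.single_apply]

end Ring

def colPivotUnit {F : Type*} [DivisionRing F] [Fintype ι] (s : ι → F) (i₀ : ι) (h : s i₀ ≠ 0) :
    (Matrix ι ι F)ˣ where
  val := colPivot s i₀
  inv := colPivot (fun i => Function.update s i₀ 1 i * (s i₀)⁻¹) i₀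
  val_inv := colPivot_mul_colPivot (by simp [mul_inv_cancel₀ h]) fun i hi => by simp [hi]
  inv_val := colPivot_mul_colPivot (by simp [inv_mul_cancel₀ h]) fun i hi => by
    simp [hi, mul_assoc, inv_mul_cancel₀ h]

def diagonalMulSingleUnit [Fintype ι] [Semiring R] (i : ι) (a : Rˣ) : (Matrix ι ι R)ˣ where
  val := diagonal (Pi.mulSingle i ↑a)
  inv := diagonal (Pi.mulSingle i ↑a⁻¹)
  val_inv := by
    rw [diagonal_mul_diagonal, ← Pi.mul_def, ← Pi.mulSingle_mul, Units.mul_inv, Pi.mulSingle_one]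
    exact diagonal_one
  inv_val := by
    rw [diagonal_mul_diagonal, ← Pi.mul_def, ← Pi.mulSingle_mul, Units.inv_mul, Pi.mulSingle_one]
    exact diagonal_one

theorem fromBlocks_one_zero_apply_inl {n o : Type*} [DecidableEq n] [DecidableEq o] [Zero R] [One R]
    (B : Matrix n o R) (D : Matrix o o R) (i : n) (k : n ⊕ o) :
    fromBlocks 1 B 0 D k (Sum.inl i) = (Pi.single (Sum.inl i) 1 : n ⊕ o → R) k := by
  rcases k with k | k <;> simp [one_apply, Pi.single_apply, eq_comm]

theorem submatrix_mul_submatrix_eq_one {α β : Type*} [Fintype ι] [Fintype β] [DecidableEq α]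
    [Semiring R]
    {M N : Matrix ι ι R} (h : M * N = 1) (σ : α ≃ ι) (τ : β ≃ ι) :
    M.submatrix σ τ * N.submatrix τ σ = 1 := by
  rw [submatrix_mul_equiv, h, submatrix_one_equiv]

end Matrix

theorem Function.update_eq_casesOn'_comp {α β : Type*} [DecidableEq α] (s : α → β) (i : α)
    (x : β) :
    Function.update s i x =
      (fun o => Option.casesOn' o x s) ∘ fun j => if j = i then none else some j := by
  ext j
  by_cases hj : j = i <;> simp [hj]

section LinearIndependent

variable {ι K V : Type*} [DecidableEq ι] [DivisionRing K] [AddCommGroup V] [Module K V]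
  {s : ι → V} {x : V}

theorem LinearIndependent.update_of_notMem_span (hs : LinearIndependent K s)
    (hx : x ∉ span K (Set.range s)) (i : ι) : LinearIndependent K (Function.update s i x) := by
  rw [Function.update_eq_casesOn'_comp]
  refine (hs.option hx).comp _ fun j j' h => ?_
  by_cases hj : j = i <;> by_cases hj' : j' = i <;> simp_all

theorem LinearIndependent.notMem_span_range_update (hs : LinearIndependent K s)
    (hx : x ∉ span K (Set.range s)) (i : ι) : s i ∉ span K (Set.range (Function.update s i x)) := by
  rw [Function.update_eq_casesOn'_comp, Set.range_comp]
  refine (hs.option hx).notMem_span_image (x := some i) ?_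
  rintro ⟨j, hj⟩
  by_cases hji : j = i <;> simp_all

end LinearIndependent

section Algebra

variable {ι K F : Type*} [Field K] [DivisionRing F] [Algebra K F] {g : ι → F} {a : F}

theorem LinearIndependent.mul_const (hg : LinearIndependent K g) (ha : a ≠ 0) :
    LinearIndependent K fun i => g i * a :=
  hg.map' (LinearMap.mulRight K a) (LinearMap.ker_eq_bot.mpr (mul_left_injective₀ ha))

theorem LinearIndependent.const_mul (hg : LinearIndependent K g) (ha : a ≠ 0) :
    LinearIndependent K fun i => a * g i :=
  hg.map' (LinearMap.mulLeft K a) (LinearMap.ker_eq_bot.mpr (mul_right_injective₀ ha))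

theorem LinearIndependent.mul_algebraMap (hg : LinearIndependent K g) {c : ι → K}
    (hc : ∀ i, c i ≠ 0) : LinearIndependent K fun i => g i * algebraMap K F (c i) := by
  convert hg.units_smul fun i => Units.mk0 (c i) (hc i) using 1
  ext i
  simp [Units.smul_def, Algebra.smul_def, Algebra.commutes]

theorem Submodule.span_range_mul_const (g : ι → F) (a : F) :
    span K (Set.range fun i => g i * a) = (span K (Set.range g)).map (LinearMap.mulRight K a) := by
  rw [map_span, ← Set.range_comp]
  rfl

variable {κ : Type*} [DecidableEq ι] {s : ι → F}

theorem LinearIndependent.update_one_mul_inv_comp (hs : LinearIndependent K s)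
    (h1 : (1 : F) ∉ span K (Set.range s)) {i : ι} (hi : s i ≠ 0) (e : κ ≃ ι) :
    LinearIndependent K fun k => Function.update s i 1 (e k) * (s i)⁻¹ :=
  ((hs.update_of_notMem_span h1 i).comp e e.injective).mul_const (inv_ne_zero hi)

theorem LinearIndependent.one_notMem_span_update_one_mul_inv_comp (hs : LinearIndependent K s)
    (h1 : (1 : F) ∉ span K (Set.range s)) {i : ι} (hi : s i ≠ 0) (e : κ ≃ ι) :
    (1 : F) ∉ span K (Set.range fun k => Function.update s i 1 (e k) * (s i)⁻¹) := by
  rw [span_range_mul_const]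
  rintro ⟨y, hy, hy1⟩
  obtain rfl : y = s i := (mul_inv_eq_one₀ hi).mp hy1
  rw [show Set.range (fun k => Function.update s i 1 (e k)) = _ from
    EquivLike.range_comp (Function.update s i 1) e] at hy
  exact hs.notMem_span_range_update h1 i hy

end Algebra

namespace InverseTypeOneZero

abbrev Idx (m : ℕ) := Fin 1 ⊕ (Fin m ⊕ Fin 1)

variable {m : ℕ}

def revIdx : Idx m → Idx m
  | .inl _ => .inr (.inr 0)
  | .inr (.inl j) => .inr (.inl j.rev)
  | .inr (.inr _) => .inl 0

theorem revIdx_involutive : Function.Involutive (revIdx (m := m)) := by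
  rintro (p | j | p) <;> simp [revIdx, Fin.fin_one_eq_zero]

def rowEquiv (m : ℕ) : Idx m ≃ Idx m :=
  revIdx_involutive.toPerm

@[simp]
theorem rowEquiv_last : rowEquiv m (Sum.inr (Sum.inr 0)) = Sum.inl 0 := rfl

/-- The column order `1, n, n - 1, …, 2` of `A'`. -/
def colEquiv (m : ℕ) : Fin 1 ⊕ (Fin 1 ⊕ Fin m) ≃ Idx m where
  toFun
    | .inl _ => .inl 0
    | .inr (.inl _) => .inr (.inr 0)
    | .inr (.inr j) => .inr (.inl j.rev)
  invFun
    | .inl _ => .inl 0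
    | .inr (.inl j) => .inr (.inr j.rev)
    | .inr (.inr _) => .inr (.inl 0)
  left_inv := by rintro (p | p | j) <;> simp [Fin.fin_one_eq_zero]
  right_inv := by rintro (p | j | p) <;> simp [Fin.fin_one_eq_zero]

@[simp]
theorem colEquiv_first : colEquiv m (Sum.inl 0) = Sum.inl 0 := rfl

variable {F : Type*}

theorem revMat_mul_apply [Semiring F] {α : Type*} (M : Matrix (Fin m) α F) (p : Fin m) (j : α) :
    (revMat F m * M) p j = M p.rev j := by
  simp [revMat, mul_apply]

theorem mul_revMat_apply [Semiring F] {α : Type*} [Fintype α] (M : Matrix α (Fin m) F) (i : α)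
    (q : Fin m) : (M * revMat F m) i q = M i q.rev := by
  simp [revMat, mul_apply, ← Fin.rev_eq_iff]

section DivisionRing

variable [DivisionRing F] (uA : (Matrix (Idx m) (Idx m) F)ˣ)
  (s : Idx m → F) (hs : s (Sum.inl 0) ≠ 0) (μ : F) (hμ : μ ≠ 0)

def newSystemUnit : (Matrix (Idx m) (Idx m) F)ˣ :=
  diagonalMulSingleUnit (Sum.inr (Sum.inr 0)) (Units.mk0 μ hμ)⁻¹ * uA *
    colPivotUnit s (Sum.inl 0) hs

theorem coe_newSystemUnit : (newSystemUnit uA s hs μ hμ : Matrix (Idx m) (Idx m) F) =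
    diagonal (Pi.mulSingle (Sum.inr (Sum.inr 0)) μ⁻¹) * (uA : Matrix (Idx m) (Idx m) F) *
      colPivot s (Sum.inl 0) := by
  simp [newSystemUnit, diagonalMulSingleUnit, colPivotUnit]

theorem coe_newSystemUnit_inv : (↑(newSystemUnit uA s hs μ hμ)⁻¹ : Matrix (Idx m) (Idx m) F) =
    colPivot (fun i => Function.update s (Sum.inl 0) 1 i * (s (Sum.inl 0))⁻¹) (Sum.inl 0) *
      (↑uA⁻¹ : Matrix (Idx m) (Idx m) F) * diagonal (Pi.mulSingle (Sum.inr (Sum.inr 0)) μ) := by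
  simp [newSystemUnit, diagonalMulSingleUnit, colPivotUnit, _root_.mul_inv_rev, Matrix.mul_assoc]

theorem coe_newSystemUnit_inv_apply_inl
    (hcol : ∀ k, (↑uA⁻¹ : Matrix (Idx m) (Idx m) F) k (Sum.inl 0) =
      (Pi.single (Sum.inl 0) 1 : Idx m → F) k)
    (i : Idx m) :
    (↑(newSystemUnit uA s hs μ hμ)⁻¹ : Matrix (Idx m) (Idx m) F) i (Sum.inl 0) =
      Function.update s (Sum.inl 0) 1 i * (s (Sum.inl 0))⁻¹ := by
  rw [coe_newSystemUnit_inv, mul_diagonal, mul_apply_of_col_eq_single _ hcol]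
  simp [colPivot]

theorem coe_newSystemUnit_inv_inl_apply (j : Idx m) :
    (↑(newSystemUnit uA s hs μ hμ)⁻¹ : Matrix (Idx m) (Idx m) F) (Sum.inl 0) j =
      (s (Sum.inl 0))⁻¹ * (↑uA⁻¹ : Matrix (Idx m) (Idx m) F) (Sum.inl 0) j *
        (Pi.mulSingle (Sum.inr (Sum.inr 0)) μ : Idx m → F) j := by
  rw [coe_newSystemUnit_inv, mul_diagonal, colPivot_mul_apply_self]
  simp

variable {uA s hs μ hμ}

theorem fromBlocks_eq_newSystemUnit_submatrix {b c : F} {b' c' : Matrix (Fin 1) (Fin m) F}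
    {B : Matrix (Fin m) (Fin m) F} {b'' : Matrix (Fin m) (Fin 1) F}
    (hA : (uA : Matrix (Idx m) (Idx m) F) =
      fromBlocks 1 (fromCols b' (of fun _ _ => b)) 0 (fromBlocks B b'' c' (of fun _ _ => c)))
    (hAs : (uA : Matrix (Idx m) (Idx m) F) *ᵥ s = Pi.single (Sum.inr (Sum.inr 0)) μ) :
    fromBlocks 1
        (fromCols (of fun _ _ => -(μ⁻¹ * c)) (-(μ⁻¹ • (c' * revMat F m))))
        0
        (fromBlocks (-(revMat F m * b'')) (-(revMat F m * B * revMat F m))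
          (of fun _ _ => -b) (-(b' * revMat F m))) =
      (newSystemUnit uA s hs μ hμ : Matrix (Idx m) (Idx m) F).submatrix (rowEquiv m)
        (colEquiv m) := by
  rw [coe_newSystemUnit, mul_colPivot, ← mulVec_mulVec, hAs, hA]
  ext (p | j | p) (q | q | k) <;>
    simp [rowEquiv, revIdx, colEquiv, mul_revMat_apply, revMat_mul_apply, hμ, Fin.fin_one_eq_zero]

end DivisionRing

theorem linearIndependent_newSystemUnit_inv_inl_apply {K : Type*} [Field K] [DivisionRing F]
    [Algebra K F] {uA : (Matrix (Idx m) (Idx m) F)ˣ} {s : Idx m → F} (hs : s (Sum.inl 0) ≠ 0)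
    {lam : K} (hμ : algebraMap K F lam ≠ 0)
    (hright : LinearIndependent K fun j => (↑uA⁻¹ : Matrix (Idx m) (Idx m) F) (Sum.inl 0) j) :
    LinearIndependent K fun j => (↑(newSystemUnit uA s hs _ hμ)⁻¹ : Matrix (Idx m) (Idx m) F)
      (Sum.inl 0) (rowEquiv m j) := by
  have hscale (j : Idx m) : (Pi.mulSingle (Sum.inr (Sum.inr 0)) (algebraMap K F lam) : Idx m → F) j
      = algebraMap K F ((Pi.mulSingle (Sum.inr (Sum.inr 0)) lam : Idx m → K) j) :=
    (Pi.apply_mulSingle (fun _ => algebraMap K F) (fun _ => map_one _) _ lam j).symm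
  simp only [coe_newSystemUnit_inv_inl_apply, hscale]
  refine ((hright.comp _ (rowEquiv m).injective).const_mul (inv_ne_zero hs)).mul_algebraMap
    fun j => ?_
  rw [Pi.mulSingle_apply]
  split_ifs
  · exact fun h => hμ (by simp [h])
  · exact one_ne_zero

end InverseTypeOneZero

open InverseTypeOneZero

/-- Inverse of type (1,0): if `f ≠ 0` has a minimal ALS of dimension `n = m + 2` with
system matrix `[[1, b', b], [0, B, b''], [0, c', c]]`, right-hand side `(0,…,0,λ)ᵀ`
and `1 ∉ L(𝒜)`, then `A' = [[1, −(1/λ) c, −(1/λ) c' Σ], [0, −Σ b'', −Σ B Σ],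
[0, −b, −b' Σ]]` gives a minimal ALS `(e₁, A', e_n)` of dimension `n` for `f⁻¹`
with `1 ∉ L(𝒜')`. -/
theorem inverse_type_one_zero {K F : Type*} [Field K] [DivisionRing F] [Algebra K F]
    {m : ℕ}
    (f : F) (hne : f ≠ 0)
    (b c : F) (b' c' : Matrix (Fin 1) (Fin m) F) (B : Matrix (Fin m) (Fin m) F)
    (b'' : Matrix (Fin m) (Fin 1) F) (lam : K)
    (A : Matrix (Fin 1 ⊕ (Fin m ⊕ Fin 1)) (Fin 1 ⊕ (Fin m ⊕ Fin 1)) F)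
    (hA : A = fromBlocks 1 (fromCols b' (Matrix.of fun _ _ => b)) 0
      (fromBlocks B b'' c' (Matrix.of fun _ _ => c)))
    (v : Matrix (Fin 1 ⊕ (Fin m ⊕ Fin 1)) (Fin 1) F)
    (hv : v = Matrix.of fun p _ =>
      if p = Sum.inr (Sum.inr 0) then algebraMap K F lam else 0)
    (Binv : Matrix (Fin 1 ⊕ (Fin m ⊕ Fin 1)) (Fin 1 ⊕ (Fin m ⊕ Fin 1)) F)
    (hAB : A * Binv = 1) (hBA : Binv * A = 1)
    (hf : f = (Binv * v) (Sum.inl 0) 0)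
    (hleft : LinearIndependent K fun p => (Binv * v) p 0)
    (hright : LinearIndependent K fun q => Binv (Sum.inl 0) q)
    (honeL : (1 : F) ∉ Submodule.span K (Set.range fun p => (Binv * v) p 0)) :
    let S : Matrix (Fin m) (Fin m) F := revMat F m
    let A' : Matrix (Fin 1 ⊕ (Fin m ⊕ Fin 1)) (Fin 1 ⊕ (Fin 1 ⊕ Fin m)) F :=
      fromBlocks 1
        (fromCols (Matrix.of fun _ _ => -((algebraMap K F lam)⁻¹ * c))
          (-((algebraMap K F lam)⁻¹ • (c' * S))))
        0
        (fromBlocks (-(S * b'')) (-(S * B * S))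
          (Matrix.of fun _ _ => -b) (-(b' * S)))
    let v' : Matrix (Fin 1 ⊕ (Fin m ⊕ Fin 1)) (Fin 1) F :=
      Matrix.of fun p _ => if p = Sum.inr (Sum.inr 0) then 1 else 0
    ∃ B' : Matrix (Fin 1 ⊕ (Fin 1 ⊕ Fin m)) (Fin 1 ⊕ (Fin m ⊕ Fin 1)) F,
      A' * B' = 1 ∧ B' * A' = 1 ∧
      (B' * v') (Sum.inl 0) 0 = f⁻¹ ∧
      (LinearIndependent K fun p => (B' * v') p 0) ∧
      (LinearIndependent K fun q => B' (Sum.inl 0) q) ∧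
      (1 : F) ∉ Submodule.span K (Set.range fun p => (B' * v') p 0) := by
  intro S A' v'
  set s : Idx m → F := fun p => (Binv * v) p 0
  have hs₀ : s (Sum.inl 0) = f := hf.symm
  have hs : s (Sum.inl 0) ≠ 0 := hs₀ ▸ hne
  have hlam : algebraMap K F lam ≠ 0 := by
    intro h
    exact hne (by simp [hf, hv, mul_apply, h])
  have hAs : A *ᵥ s = Pi.single (Sum.inr (Sum.inr 0)) (algebraMap K F lam) := by
    change A *ᵥ (Binv *ᵥ fun j => v j 0) = _
    rw [mulVec_mulVec, hAB, one_mulVec, hv]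
    ext j
    simp [Pi.single_apply]
  have hcol : ∀ k, Binv k (Sum.inl 0) = (Pi.single (Sum.inl 0) 1 : Idx m → F) k :=
    col_eq_single_of_mul_eq_one hBA fun k => by rw [hA, fromBlocks_one_zero_apply_inl]
  have hv' : ∀ k, v' k 0 = (Pi.single (Sum.inr (Sum.inr 0)) 1 : Idx m → F) k :=
    fun k => (Pi.single_apply _ _ _).symm
  let uA : (Matrix (Idx m) (Idx m) F)ˣ := ⟨A, Binv, hAB, hBA⟩
  set u := newSystemUnit uA s hs _ hlam with hu
  have hA' : A' = (u : Matrix (Idx m) (Idx m) F).submatrix (rowEquiv m) (colEquiv m) :=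
    fromBlocks_eq_newSystemUnit_submatrix hA hAs
  refine ⟨(↑u⁻¹ : Matrix (Idx m) (Idx m) F).submatrix (colEquiv m) (rowEquiv m),
    hA' ▸ submatrix_mul_submatrix_eq_one u.mul_inv _ _,
    hA' ▸ submatrix_mul_submatrix_eq_one u.inv_mul _ _, ?_, ?_, ?_, ?_⟩ <;>
    simp only [hu, mul_apply_of_col_eq_single _ hv', submatrix_apply, rowEquiv_last, colEquiv_first,
      coe_newSystemUnit_inv_apply_inl uA s _ _ hlam hcol]
  · simp [hs₀]
  · exact hleft.update_one_mul_inv_comp honeL hs (colEquiv m)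
  · exact linearIndependent_newSystemUnit_inv_inl_apply _ hlam hright
  · exact hleft.one_notMem_span_update_one_mul_inv_comp honeL hs (colEquiv m)
end
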